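/- For a discrete-time LPV-SSA Σ, the span of states reachable from the zero initial state equals the column space of the extended reachability matrix ℛ_{n_x-1} when ℙ ⊆ ℝ^{n_p} has nonempty interior; in particular, Σ is span-reachable from 0 if and only if rank ℛ_{n_x-1} = n_x. -/

import Mathlib

open Matrix

/-- Affine matrix-valued function of the scheduling value: `M(q) = M₀ + Σᵢ qᵢ Mᵢ`. -/
noncomputable def affMat {np : ℕ} {m n : Type*}
    (M : Fin (np + 1) → Matrix m n ℝ) (q : Fin np → ℝ) : Matrix m n ℝ :=
  M 0 + ∑ i : Fin np, q i • M i.succ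

/-- State trajectory of a discrete-time LPV-SSA: `x(t+1) = A(p(t)) x(t) + B(p(t)) u(t)`. -/
noncomputable def st {np : ℕ} {X U : Type*} [Fintype X] [Fintype U]
    (A : Fin (np + 1) → Matrix X X ℝ) (B : Fin (np + 1) → Matrix X U ℝ)
    (x0 : X → ℝ) (u : ℕ → U → ℝ) (p : ℕ → Fin np → ℝ) : ℕ → X → ℝ
  | 0 => x0
  | t + 1 => affMat A (p t) *ᵥ st A B x0 u p t + affMat B (p t) *ᵥ u t

/-- Output trajectory (input-output map from initial state `x0`):
`y(t) = C(p(t)) x(t) + D(p(t)) u(t)`. -/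
noncomputable def out {np : ℕ} {X U Y : Type*} [Fintype X] [Fintype U]
    (A : Fin (np + 1) → Matrix X X ℝ) (B : Fin (np + 1) → Matrix X U ℝ)
    (C : Fin (np + 1) → Matrix Y X ℝ) (D : Fin (np + 1) → Matrix Y U ℝ)
    (x0 : X → ℝ) (u : ℕ → U → ℝ) (p : ℕ → Fin np → ℝ) (t : ℕ) : Y → ℝ :=
  affMat C (p t) *ᵥ st A B x0 u p t + affMat D (p t) *ᵥ u t

/-- Kernel of the `k`-step extended observability matrix `𝒪_k`. -/
noncomputable def kerO {np nx ny : ℕ}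
    (A : Fin (np + 1) → Matrix (Fin nx) (Fin nx) ℝ)
    (C : Fin (np + 1) → Matrix (Fin ny) (Fin nx) ℝ) : ℕ → Submodule ℝ (Fin nx → ℝ)
  | 0 => ⨅ i : Fin (np + 1), LinearMap.ker (Matrix.mulVecLin (C i))
  | k + 1 => kerO A C k ⊓
      ⨅ i : Fin (np + 1), Submodule.comap (Matrix.mulVecLin (A i)) (kerO A C k)

/-- Column space (range) of the `k`-step extended reachability matrix `ℛ_k`. -/
noncomputable def reachR {np nx nu : ℕ}
    (A : Fin (np + 1) → Matrix (Fin nx) (Fin nx) ℝ)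
    (B : Fin (np + 1) → Matrix (Fin nx) (Fin nu) ℝ) : ℕ → Submodule ℝ (Fin nx → ℝ)
  | 0 => ⨆ i : Fin (np + 1), LinearMap.range (Matrix.mulVecLin (B i))
  | k + 1 => reachR A B k ⊔
      ⨆ i : Fin (np + 1), Submodule.map (Matrix.mulVecLin (A i)) (reachR A B k)

/-!
Each state reachable at time `t` lies in `ℛ_t`. The chain `ℛ_0 ≤ ℛ_1 ≤ ⋯` is constant once it
stalls, since each term determines the next, and every strict step raises the dimension, so it
stalls by step `n_x - 1` (when `ℛ_0 ≠ 0`; otherwise it is zero throughout).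
Conversely, `q ↦ A(q) x` is affine and a set with nonempty interior spans `ℝ^{n_p}` affinely, so a
subspace containing `A(q) x` for all `q ∈ P` contains every `A_i x`. Hence the span of the
reachable states contains the columns of every `B_i` and is invariant under every `A_i`, so it
contains every `ℛ_k`.
-/

open Module

theorem apply_add_eq_of_succ_eq {α : Type*} {V : ℕ → α} {F : α → α}
    (hV : ∀ k, V (k + 1) = F (V k)) {m : ℕ} (hm : V (m + 1) = V m) (j : ℕ) :
    V (m + j) = V m := by
  induction j with
  | zero => rfl
  | succ j ih => rw [← Nat.add_assoc, hV, ih, ← hV, hm]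

section Chain

variable {K M : Type*} [DivisionRing K] [AddCommGroup M] [Module K M]

theorem Submodule.finrank_add_le_of_lt_succ [FiniteDimensional K M] {V : ℕ → Submodule K M}
    {j : ℕ} (hV : ∀ i < j, V i < V (i + 1)) : finrank K (V 0) + j ≤ finrank K (V j) := by
  induction j with
  | zero => rfl
  | succ j ih =>
    have := Submodule.finrank_lt_finrank_of_lt (hV j j.lt_succ_self)
    have := ih fun i hi => hV i (hi.trans j.lt_succ_self)
    omega

theorem Submodule.le_apply_finrank_sub_finrank_zero [FiniteDimensional K M]
    {V : ℕ → Submodule K M} {F : Submodule K M → Submodule K M} (hmono : Monotone V)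
    (hV : ∀ k, V (k + 1) = F (V k)) (k : ℕ) : V k ≤ V (finrank K M - finrank K (V 0)) := by
  set N := finrank K M - finrank K (V 0)
  obtain ⟨m, hmN, hm⟩ : ∃ m ≤ N, V (m + 1) = V m := by
    by_contra! h
    have hgrow := Submodule.finrank_add_le_of_lt_succ (V := V) (j := N + 1) fun i hi =>
      (hmono i.le_succ).lt_of_ne (h i (Nat.le_of_lt_succ hi)).symm
    have hle := Submodule.finrank_le (V (N + 1))
    have hle0 := Submodule.finrank_le (V 0)
    omega
  rcases le_total k N with hk | hk
  · exact hmono hk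
  · rw [← Nat.add_sub_cancel' (hmN.trans hk), apply_add_eq_of_succ_eq hV hm]
    exact hmono hmN

end Chain

theorem AffineMap.apply_mem_of_mapsTo_of_interior_nonempty {V E : Type*}
    [NormedAddCommGroup V] [NormedSpace ℝ V] [AddCommGroup E] [Module ℝ E]
    (f : V →ᵃ[ℝ] E) (S : AffineSubspace ℝ E) {P : Set V} (hP : (interior P).Nonempty)
    (hf : Set.MapsTo f P S) (q : V) : f q ∈ S := by
  have htop : affineSpan ℝ P = ⊤ :=
    top_unique <| isOpen_interior.affineSpan_eq_top hP ▸ affineSpan_mono ℝ interior_subset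
  have : affineSpan ℝ P ≤ S.comap f := affineSpan_le.mpr hf
  exact AffineSubspace.mem_comap.mp (this (htop ▸ AffineSubspace.mem_top ℝ V q))

section Affine

variable {np : ℕ} {m n : Type*} [Fintype n]

theorem affMat_mulVec (M : Fin (np + 1) → Matrix m n ℝ) (q : Fin np → ℝ) (v : n → ℝ) :
    affMat M q *ᵥ v = M 0 *ᵥ v + ∑ i : Fin np, q i • (M i.succ *ᵥ v) := by
  simp [affMat, Matrix.add_mulVec, Matrix.sum_mulVec, Matrix.smul_mulVec]

theorem affMat_mulVec_mem {M : Fin (np + 1) → Matrix m n ℝ} {v : n → ℝ}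
    {S : Submodule ℝ (m → ℝ)} (h : ∀ j, M j *ᵥ v ∈ S) (q : Fin np → ℝ) :
    affMat M q *ᵥ v ∈ S := by
  rw [affMat_mulVec]
  exact S.add_mem (h 0) (S.sum_mem fun i _ => S.smul_mem _ (h i.succ))

theorem mulVec_mem_of_affMat_mulVec_mem {M : Fin (np + 1) → Matrix m n ℝ} {v : n → ℝ}
    {S : Submodule ℝ (m → ℝ)} {P : Set (Fin np → ℝ)} (hP : (interior P).Nonempty)
    (h : ∀ q ∈ P, affMat M q *ᵥ v ∈ S) (j : Fin (np + 1)) : M j *ᵥ v ∈ S := by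
  obtain ⟨f, hf⟩ : ∃ f : (Fin np → ℝ) →ᵃ[ℝ] (m → ℝ), ∀ q, f q = affMat M q *ᵥ v :=
    ⟨(Fintype.linearCombination ℝ fun i => M i.succ *ᵥ v).toAffineMap +
      AffineMap.const ℝ _ (M 0 *ᵥ v), fun q => by
        simp [affMat_mulVec, Fintype.linearCombination_apply, add_comm]⟩
  have hall (q : Fin np → ℝ) : affMat M q *ᵥ v ∈ S :=
    hf q ▸ f.apply_mem_of_mapsTo_of_interior_nonempty S.toAffineSubspace hP
      (fun q hq => (hf q).symm ▸ h q hq) q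
  have h0 : affMat M 0 *ᵥ v = M 0 *ᵥ v := by simp [affMat_mulVec]
  cases j using Fin.cases with
  | zero => exact h0 ▸ hall 0
  | succ i =>
    have : affMat M (Pi.single i 1) *ᵥ v - affMat M 0 *ᵥ v = M i.succ *ᵥ v := by
      simp [affMat_mulVec, Pi.single_apply]
    exact this ▸ S.sub_mem (hall _) (hall 0)

end Affine

section Trajectory

variable {np : ℕ} {X U : Type*} [Fintype X] [Fintype U]
  (A : Fin (np + 1) → Matrix X X ℝ) (B : Fin (np + 1) → Matrix X U ℝ)

theorem st_congr {x0 : X → ℝ} {u u' : ℕ → U → ℝ} {p p' : ℕ → Fin np → ℝ} {t : ℕ}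
    (hu : ∀ s < t, u s = u' s) (hp : ∀ s < t, p s = p' s) :
    st A B x0 u p t = st A B x0 u' p' t := by
  induction t with
  | zero => rfl
  | succ t ih =>
    rw [st, st, ih (fun s hs => hu s (hs.trans t.lt_succ_self))
      (fun s hs => hp s (hs.trans t.lt_succ_self)), hu t t.lt_succ_self, hp t t.lt_succ_self]

def reachableStates (P : Set (Fin np → ℝ)) : Set (X → ℝ) :=
  {x | ∃ (u : ℕ → U → ℝ) (p : ℕ → Fin np → ℝ), (∀ t, p t ∈ P) ∧ ∃ t : ℕ, x = st A B 0 u p t}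

variable {A B} {P : Set (Fin np → ℝ)}

theorem affMat_mulVec_add_mem_reachableStates {x : X → ℝ} (hx : x ∈ reachableStates A B P)
    {q : Fin np → ℝ} (hq : q ∈ P) (w : U → ℝ) :
    affMat A q *ᵥ x + affMat B q *ᵥ w ∈ reachableStates A B P := by
  obtain ⟨u, p, hp, t, rfl⟩ := hx
  refine ⟨Function.update u t w, fun s => if s < t then p s else q,
    fun s => by dsimp only; split_ifs <;> simp [hp, hq], t + 1, ?_⟩
  rw [st, st_congr A B (u' := u) (p' := p) (fun s hs => Function.update_of_ne hs.ne _ _)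
    (fun s hs => if_pos hs)]
  simp

theorem zero_mem_reachableStates (hP : P.Nonempty) : (0 : X → ℝ) ∈ reachableStates A B P :=
  let ⟨q, hq⟩ := hP
  ⟨0, fun _ => q, fun _ => hq, 0, rfl⟩

end Trajectory

section Reachability

variable {np nx nu : ℕ} {A : Fin (np + 1) → Matrix (Fin nx) (Fin nx) ℝ}
  {B : Fin (np + 1) → Matrix (Fin nx) (Fin nu) ℝ}

theorem reachR_monotone : Monotone (reachR A B) :=
  monotone_nat_of_le_succ fun _ => le_sup_left

theorem mulVec_mem_reachR_zero (j : Fin (np + 1)) (w : Fin nu → ℝ) :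
    B j *ᵥ w ∈ reachR A B 0 :=
  Submodule.mem_iSup_of_mem j ⟨w, rfl⟩

theorem mulVec_mem_reachR_succ {k : ℕ} {v : Fin nx → ℝ} (hv : v ∈ reachR A B k)
    (j : Fin (np + 1)) : A j *ᵥ v ∈ reachR A B (k + 1) :=
  Submodule.mem_sup_right (Submodule.mem_iSup_of_mem j ⟨v, hv, rfl⟩)

theorem reachR_le {S : Submodule ℝ (Fin nx → ℝ)} (hB : ∀ j w, B j *ᵥ w ∈ S)
    (hA : ∀ j, S.map (A j).mulVecLin ≤ S) (k : ℕ) : reachR A B k ≤ S := by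
  induction k with
  | zero => exact iSup_le fun j => by rintro _ ⟨w, rfl⟩; exact hB j w
  | succ k ih => exact sup_le ih <| iSup_le fun j => (Submodule.map_mono ih).trans (hA j)

theorem reachR_le_reachR_pred (k : ℕ) : reachR A B k ≤ reachR A B (nx - 1) := by
  let F (W : Submodule ℝ (Fin nx → ℝ)) := W ⊔ ⨆ j, W.map (A j).mulVecLin
  have hV (k : ℕ) : reachR A B (k + 1) = F (reachR A B k) := rfl
  by_cases h0 : reachR A B 0 = ⊥
  · have h1 : reachR A B (0 + 1) = reachR A B 0 := by simp [hV, h0, F]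
    rw [← Nat.zero_add k, apply_add_eq_of_succ_eq hV h1, h0]
    exact bot_le
  · have hrank : 1 ≤ finrank ℝ (reachR A B 0) :=
      Nat.one_le_iff_ne_zero.mpr (Submodule.finrank_eq_zero.not.mpr h0)
    refine (Submodule.le_apply_finrank_sub_finrank_zero reachR_monotone hV k).trans
      (reachR_monotone ?_)
    simp only [finrank_fin_fun]
    omega

theorem st_mem_reachR (u : ℕ → Fin nu → ℝ) (p : ℕ → Fin np → ℝ) (t : ℕ) :
    st A B 0 u p t ∈ reachR A B t := by
  induction t with
  | zero => exact Submodule.zero_mem _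
  | succ t ih =>
    exact Submodule.add_mem _ (affMat_mulVec_mem (mulVec_mem_reachR_succ ih) _)
      (reachR_monotone (t + 1).zero_le (affMat_mulVec_mem (mulVec_mem_reachR_zero · _) _))

theorem span_reachableStates_le_reachR {P : Set (Fin np → ℝ)} :
    Submodule.span ℝ (reachableStates A B P) ≤ reachR A B (nx - 1) :=
  Submodule.span_le.mpr fun _ ⟨u, p, _, t, hx⟩ =>
    hx ▸ reachR_le_reachR_pred t (st_mem_reachR u p t)

theorem reachR_le_span_reachableStates {P : Set (Fin np → ℝ)} (hP : (interior P).Nonempty)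
    (k : ℕ) : reachR A B k ≤ Submodule.span ℝ (reachableStates A B P) := by
  have hPne : P.Nonempty := hP.mono interior_subset
  refine reachR_le (fun j w => ?_) (fun j => (Submodule.map_span_le _ _ _).mpr fun x hx => ?_) k
  · refine mulVec_mem_of_affMat_mulVec_mem hP (fun q hq => Submodule.subset_span ?_) j
    simpa using affMat_mulVec_add_mem_reachableStates (zero_mem_reachableStates hPne) hq w
  · refine mulVec_mem_of_affMat_mulVec_mem (M := A) hP (fun q hq => Submodule.subset_span ?_) j
    simpa using affMat_mulVec_add_mem_reachableStates hx hq 0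

end Reachability

theorem stmt12_general {np nx nu : ℕ} (P : Set (Fin np → ℝ))
    (hP : (interior P).Nonempty)
    (A : Fin (np + 1) → Matrix (Fin nx) (Fin nx) ℝ)
    (B : Fin (np + 1) → Matrix (Fin nx) (Fin nu) ℝ) :
    Submodule.span ℝ {x : Fin nx → ℝ |
        ∃ (u : ℕ → Fin nu → ℝ) (p : ℕ → Fin np → ℝ),
          (∀ t, p t ∈ P) ∧ ∃ t : ℕ, x = st A B (0 : Fin nx → ℝ) u p t} =
      reachR A B (nx - 1) ∧
    (Submodule.span ℝ {x : Fin nx → ℝ |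
        ∃ (u : ℕ → Fin nu → ℝ) (p : ℕ → Fin np → ℝ),
          (∀ t, p t ∈ P) ∧ ∃ t : ℕ, x = st A B (0 : Fin nx → ℝ) u p t} = ⊤ ↔
      reachR A B (nx - 1) = ⊤) := by
  have hspan : Submodule.span ℝ (reachableStates A B P) = reachR A B (nx - 1) :=
    span_reachableStates_le_reachR.antisymm (reachR_le_span_reachableStates hP _)
  exact ⟨hspan, by rw [← hspan]; rfl⟩

/-- if the scheduling set has nonempty interior, the span of the states of
a discrete-time LPV-SSA reachable from the zero initial state equals the column space of
the extended reachability matrix `ℛ_{n_x-1}`; in particular the system is span-reachable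
from `0` iff `rank ℛ_{n_x-1} = n_x`. -/
theorem stmt12 {np nx nu : ℕ} (hnx : 1 ≤ nx) (P : Set (Fin np → ℝ))
    (hP : (interior P).Nonempty)
    (A : Fin (np + 1) → Matrix (Fin nx) (Fin nx) ℝ)
    (B : Fin (np + 1) → Matrix (Fin nx) (Fin nu) ℝ) :
    Submodule.span ℝ {x : Fin nx → ℝ |
        ∃ (u : ℕ → Fin nu → ℝ) (p : ℕ → Fin np → ℝ),
          (∀ t, p t ∈ P) ∧ ∃ t : ℕ, x = st A B (0 : Fin nx → ℝ) u p t} =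
      reachR A B (nx - 1) ∧
    (Submodule.span ℝ {x : Fin nx → ℝ |
        ∃ (u : ℕ → Fin nu → ℝ) (p : ℕ → Fin np → ℝ),
          (∀ t, p t ∈ P) ∧ ∃ t : ℕ, x = st A B (0 : Fin nx → ℝ) u p t} = ⊤ ↔
      reachR A B (nx - 1) = ⊤) :=
  stmt12_general P hP A B
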